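/- Let K be an imaginary quadratic field and N a positive integer. Every ideal of the ring of integers O_K of norm N can be written uniquely as kI, where k is a positive integer with k² dividing N and I is a primitive ideal (cyclic quotient) of norm N/k². -/

import Mathlib

/-!
Call `I` primitive if it lies in no `p𝓞_K` with `p` a rational prime. If `J` is not primitive
then `J = (p) J'` with `N(J') = N(J) / p² < N(J)`, so peeling off rational primes writes
`J = (k) I` with `I` primitive. Uniqueness: `(k) I ≤ (m)` with `I` primitive forces `m ∣ k`
(for a prime `m = p` by Bézout, since `(p)` and `(k)` are comaximal when `p ∤ k`; in general by
cancelling the principal ideal `(p)`). Finally, as `𝓞_K` is free of rank two over `ℤ`, Smith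
normal form gives `𝓞_K ⧸ I ≅ ℤ/a × ℤ/b`; a common prime factor `p` of `a` and `b` would give
`I ≤ (p)`, so for primitive `I` the quotient is cyclic. Conversely a cyclic quotient cannot
surject onto `𝓞_K ⧸ (p)`, which has exponent `p` but order `p²`.
-/

open Module NumberField

namespace Ideal

variable {R : Type*} [CommRing R]

/-- Primitive in the classical sense; for rings free of rank two over `ℤ` this agrees with
`R ⧸ I` being cyclic, see `Ideal.isPrimitive_iff_isAddCyclic`. -/
def IsPrimitive (I : Ideal R) : Prop :=
  ∀ p : ℕ, p.Prime → ¬ I ≤ span {(p : R)}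

namespace IsPrimitive

variable {I : Ideal R}

theorem ne_bot (hI : I.IsPrimitive) : I ≠ ⊥ := by
  rintro rfl
  exact hI 2 Nat.prime_two bot_le

theorem prime_dvd_of_span_natCast_mul_le {p k : ℕ} (hI : I.IsPrimitive) (hp : p.Prime)
    (h : span {(k : R)} * I ≤ span {(p : R)}) : p ∣ k := by
  by_contra hpk
  obtain ⟨u, v, huv⟩ : IsCoprime (p : ℤ) k :=
    Nat.isCoprime_iff_coprime.mpr (hp.coprime_iff_not_dvd.mpr hpk)
  refine hI p hp fun x hx => ?_
  have hkx : (k : R) * x ∈ span {(p : R)} := h (mul_mem_mul (mem_span_singleton_self _) hx)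
  have hx_eq : x = (u : R) * (p : R) * x + (v : R) * ((k : R) * x) := by
    have huv' := congrArg (Int.cast : ℤ → R) huv
    push_cast at huv'
    linear_combination (-x) * huv'
  rw [hx_eq]
  exact add_mem (mul_mem_right _ _ (mul_mem_left _ _ (mem_span_singleton_self _)))
    (mul_mem_left _ _ hkx)

variable [IsDomain R] [CharZero R]

theorem dvd_of_span_natCast_mul_le {m k : ℕ} (hI : I.IsPrimitive)
    (h : span {(k : R)} * I ≤ span {(m : R)}) : m ∣ k := by
  induction m using induction_on_primes generalizing k with
  | zero =>
    have hk : span {(k : R)} = ⊥ := by simpa [hI.ne_bot, mul_eq_bot] using h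
    simpa using hk
  | one => exact one_dvd k
  | prime_mul p m hp ih =>
    have hpR : (p : R) ≠ 0 := Nat.cast_ne_zero.mpr hp.ne_zero
    have hle : span {((p * m : ℕ) : R)} ≤ span {(p : R)} :=
      span_singleton_le_span_singleton.mpr ⟨m, by push_cast; rfl⟩
    obtain ⟨k, rfl⟩ := hI.prime_dvd_of_span_natCast_mul_le hp (h.trans hle)
    have h' : span {(p : R)} * (span {(k : R)} * I) ≤ span {(p : R)} * span {(m : R)} := by
      simpa only [← mul_assoc, span_singleton_mul_span_singleton, Nat.cast_mul] using h
    exact mul_dvd_mul_left p (ih ((span_singleton_mul_right_mono hpR).mp h'))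

theorem eq_of_span_natCast_mul_eq {I' : Ideal R} {k k' : ℕ} (hI : I.IsPrimitive)
    (hI' : I'.IsPrimitive) (hk : k ≠ 0) (h : span {(k : R)} * I = span {(k' : R)} * I') :
    k = k' ∧ I = I' := by
  obtain rfl : k = k' := Nat.dvd_antisymm
    (hI'.dvd_of_span_natCast_mul_le (h ▸ mul_le_left))
    (hI.dvd_of_span_natCast_mul_le (h ▸ mul_le_left))
  exact ⟨rfl, (span_singleton_mul_right_inj (Nat.cast_ne_zero.mpr hk)).mp h⟩

end IsPrimitive

section Domain

variable {S : Type*} [CommRing S] [IsDomain S]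

theorem le_span_natCast_of_forall_dvd_smithCoeffs {ι : Type*} [Fintype ι] (b : Basis ι ℤ S)
    {I : Ideal S} (hI : I ≠ ⊥) {p : ℕ} (h : ∀ i, (p : ℤ) ∣ I.smithCoeffs b hI i) :
    I ≤ span {(p : S)} := by
  intro x hx
  rw [← show ((⟨x, hx⟩ : I) : S) = x from rfl, ← (I.selfBasis b hI).sum_repr ⟨x, hx⟩]
  push_cast
  refine sum_mem _ fun i _ => zsmul_mem ?_ _
  obtain ⟨c, hc⟩ := h i
  rw [selfBasis_def, hc, mul_smul, natCast_zsmul, nsmul_eq_mul]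
  exact mul_mem_right _ _ (mem_span_singleton_self _)

theorem IsPrimitive.isAddCyclic [Free ℤ S] [Module.Finite ℤ S] (h2 : finrank ℤ S = 2)
    {I : Ideal S} (hI : I.IsPrimitive) : IsAddCyclic (S ⧸ I) := by
  let b := Free.chooseBasis ℤ S
  let a i := (I.smithCoeffs b hI.ne_bot i).natAbs
  have hcop : Pairwise fun i j => (a i).Coprime (a j) := by
    intro i j hij
    by_contra hij_cop
    obtain ⟨p, hp, hpi, hpj⟩ := Nat.Prime.not_coprime_iff_dvd.mp hij_cop
    refine hI p hp (le_span_natCast_of_forall_dvd_smithCoeffs b hI.ne_bot fun l => ?_)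
    have hl : l = i ∨ l = j := by
      by_contra! hl
      have h3 := Fintype.two_lt_card_iff.mpr ⟨i, j, l, hij, hl.1.symm, hl.2.symm⟩
      rw [← finrank_eq_card_chooseBasisIndex, h2] at h3
      exact h3.false
    rcases hl with rfl | rfl
    · exact Int.natCast_dvd.mpr hpi
    · exact Int.natCast_dvd.mpr hpj
  let e := (ZMod.prodEquivPi a hcop).toAddEquiv.trans (I.quotientEquivPiZMod b hI.ne_bot).symm
  exact isAddCyclic_of_surjective e.toAddMonoidHom e.surjective

end Domain

section DedekindDomain

variable {S : Type*} [CommRing S] [IsDedekindDomain S] [Free ℤ S] [Module.Finite ℤ S]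

theorem exists_eq_span_natCast_mul_isPrimitive {J : Ideal S} (hJ : J ≠ ⊥) :
    ∃ k : ℕ, 0 < k ∧ ∃ I : Ideal S, I.IsPrimitive ∧ J = span {(k : S)} * I := by
  induction hn : absNorm J using Nat.strong_induction_on generalizing J with
  | _ n ih =>
    by_cases hJp : J.IsPrimitive
    · exact ⟨1, one_pos, J, hJp, by simp⟩
    simp only [IsPrimitive, not_forall, not_not] at hJp
    obtain ⟨p, hp, hle⟩ := hJp
    obtain ⟨J', rfl⟩ := dvd_iff_le.mpr hle
    have hJ' : J' ≠ ⊥ := right_ne_zero_of_mul hJ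
    have hlt : absNorm J' < n := by
      have hpos : 0 < absNorm J' := Nat.pos_of_ne_zero (absNorm_eq_zero_iff.not.mpr hJ')
      have hp1 : 1 < p ^ finrank ℤ S := Nat.one_lt_pow finrank_pos.ne' hp.one_lt
      rw [← hn, map_mul, absNorm_span_natCast]
      exact lt_mul_left hpos hp1
    obtain ⟨k, hk, I, hI, rfl⟩ := ih _ hlt hJ' rfl
    refine ⟨p * k, Nat.mul_pos hp.pos hk, I, hI, ?_⟩
    rw [← mul_assoc, span_singleton_mul_span_singleton, Nat.cast_mul]

theorem isPrimitive_of_isAddCyclic (h : 1 < finrank ℤ S) {I : Ideal S} [IsAddCyclic (S ⧸ I)] :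
    I.IsPrimitive := by
  intro p hp hle
  have : IsAddCyclic (S ⧸ span {(p : S)}) :=
    isAddCyclic_of_surjective (Quotient.factor hle) (Quotient.factor_surjective hle)
  have hexp : AddMonoid.exponent (S ⧸ span {(p : S)}) ∣ p := by
    refine AddMonoid.exponent_dvd_of_forall_nsmul_eq_zero fun x => ?_
    obtain ⟨x, rfl⟩ := Quotient.mk_surjective x
    rw [← map_nsmul, nsmul_eq_mul, Quotient.eq_zero_iff_mem]
    exact mul_mem_right _ _ (mem_span_singleton_self _)
  rw [IsAddCyclic.exponent_eq_card, ← Submodule.cardQuot_apply, ← absNorm_apply,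
    absNorm_span_natCast] at hexp
  exact (Nat.pow_lt_pow_right hp.one_lt h).not_ge (by simpa using Nat.le_of_dvd hp.pos hexp)

theorem isPrimitive_iff_isAddCyclic (h2 : finrank ℤ S = 2) {I : Ideal S} :
    I.IsPrimitive ↔ IsAddCyclic (S ⧸ I) :=
  ⟨fun hI => hI.isAddCyclic h2, fun _ => isPrimitive_of_isAddCyclic (by omega)⟩

end DedekindDomain

end Ideal

theorem ideal_eq_unique_mul_primitive_general
    (K : Type*) [Field K] [NumberField K]
    (h2 : Module.finrank ℚ K = 2)
    (N : ℕ) (hN : 0 < N)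
    (J : Ideal (𝓞 K)) (hJ : Ideal.absNorm J = N) :
    ∃! kI : ℕ × Ideal (𝓞 K),
      0 < kI.1 ∧ kI.1 ^ 2 ∣ N ∧
      IsAddCyclic ((𝓞 K) ⧸ kI.2) ∧
      Ideal.absNorm kI.2 = N / kI.1 ^ 2 ∧
      J = Ideal.span {(kI.1 : 𝓞 K)} * kI.2 := by
  have h2ℤ : finrank ℤ (𝓞 K) = 2 := by rw [RingOfIntegers.rank, h2]
  have hJ0 : J ≠ ⊥ := by
    rintro rfl
    rw [Ideal.absNorm_bot] at hJ
    omega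
  obtain ⟨k, hk, I, hI, rfl⟩ := Ideal.exists_eq_span_natCast_mul_isPrimitive hJ0
  have hN_eq : N = k ^ 2 * Ideal.absNorm I := by
    rw [← hJ, map_mul, Ideal.absNorm_span_natCast, h2ℤ]
  refine ⟨(k, I), ⟨hk, hN_eq ▸ dvd_mul_right _ _, (Ideal.isPrimitive_iff_isAddCyclic h2ℤ).mp hI,
    by rw [hN_eq, Nat.mul_div_cancel_left _ (by positivity)], rfl⟩, ?_⟩
  rintro ⟨k', I'⟩ ⟨-, -, hI', -, h⟩
  obtain ⟨hk', hI'⟩ :=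
    hI.eq_of_span_natCast_mul_eq ((Ideal.isPrimitive_iff_isAddCyclic h2ℤ).mpr hI') hk.ne' h
  exact Prod.ext hk'.symm hI'.symm

/-- Every ideal of norm `N` of the ring of integers of an imaginary quadratic
field can be written uniquely as `kI` with `k` a positive integer, `k² ∣ N`,
and `I` a primitive ideal (cyclic quotient) of norm `N/k²`. -/
theorem ideal_eq_unique_mul_primitive (d : ℕ) (hd : 0 < d) (hdsq : Squarefree d)
    (K : Type*) [Field K] [NumberField K]
    (h2 : Module.finrank ℚ K = 2)
    (s : K) (hs : s ^ 2 = -(d : K))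
    (N : ℕ) (hN : 0 < N)
    (J : Ideal (𝓞 K)) (hJ : Ideal.absNorm J = N) :
    ∃! kI : ℕ × Ideal (𝓞 K),
      0 < kI.1 ∧ kI.1 ^ 2 ∣ N ∧
      IsAddCyclic ((𝓞 K) ⧸ kI.2) ∧
      Ideal.absNorm kI.2 = N / kI.1 ^ 2 ∧
      J = Ideal.span {(kI.1 : 𝓞 K)} * kI.2 :=
  ideal_eq_unique_mul_primitive_general K h2 N hN J hJ
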